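/- Let F be a Pythagorean field of characteristic not 2 and let H be a quaternion algebra over F. Then every commutator in H is itself a commutator of two commutators: {xy − yx : x, y ∈ H} = {uv − vu : u, v commutators in H}. In particular, the set of commutators of H is an F-vector subspace of H. -/

import Mathlib

/-!
A commutator `y z - z y` has zero real part. Conversely, a pure quaternion `w ≠ 0` is the
commutator of two pure quaternions: take a pure `y` orthogonal to `w` for the norm form, so that
`y` anticommutes with `w`, and with `y² = s ≠ 0`; then `y (y w) - (y w) y = 2 s w`. Such a `y`
exists because the pure quaternions orthogonal to `w` form a plane, and a plane cannot be totally
isotropic for the nondegenerate ternary norm form. So the commutators are the pure quaternions, a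
subspace, and commutators of pure quaternions already exhaust it.
-/

open Quaternion

theorem eq_commutator_of_mul_self_eq_algebraMap {F A : Type*} [Field F] [Ring A] [Algebra F A]
    {y w : A} {s : F} (h2s : 2 * s ≠ 0) (hy : y * y = algebraMap F A s)
    (hyw : w * y = -(y * w)) :
    w = y * ((2 * s)⁻¹ • (y * w)) - (2 * s)⁻¹ • (y * w) * y := by
  have h : y * (y * w) - y * w * y = (2 * s) • w := by
    rw [← mul_assoc, hy, mul_assoc, hyw, Algebra.algebraMap_eq_smul_one, smul_one_mul,
      mul_neg, sub_neg_eq_add, ← mul_assoc, hy, Algebra.algebraMap_eq_smul_one, smul_one_mul,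
      ← two_smul F, smul_smul]
  rw [mul_smul_comm, smul_mul_assoc, ← smul_sub, h, smul_smul, inv_mul_cancel₀ h2s, one_smul]

namespace QuaternionAlgebra

variable {F : Type*} [Field F] {c₁ c₂ : F}

theorem re_mul_sub_mul (y z : ℍ[F, c₁, c₂]) : (y * z - z * y).re = 0 := by
  simp only [re_sub, re_mul]
  ring

theorem mul_self_eq_algebraMap_of_re_eq_zero {y : ℍ[F, c₁, c₂]} (hy : y.re = 0) :
    y * y = algebraMap F _ (y * y).re := by
  ext <;> simp [algebraMap_eq, hy] <;> ring

theorem mul_comm_eq_neg_of_re_eq_zero {y w : ℍ[F, c₁, c₂]} (hy : y.re = 0) (hw : w.re = 0)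
    (hyw : (y * w).re = 0) : w * y = -(y * w) := by
  ext
  · simp only [re_mul, re_neg, hy, hw] at hyw ⊢
    linear_combination 2 * hyw
  all_goals simp [hy, hw]; ring

theorem exists_anisotropic_orthogonal_of_re_eq_zero (h2 : (2 : F) ≠ 0) (hc₁ : c₁ ≠ 0) (hc₂ : c₂ ≠ 0)
    {w : ℍ[F, c₁, c₂]} (hw : w.re = 0) (hw0 : w ≠ 0) :
    ∃ y : ℍ[F, c₁, c₂], y.re = 0 ∧ (y * w).re = 0 ∧ (y * y).re ≠ 0 := by
  by_contra! h
  apply hw0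
  -- twisted cross products of `w` with the basis vectors; they span the plane orthogonal to `w`
  have h₁ := h ⟨0, c₂ * w.imJ, -c₁ * w.imI, 0⟩ rfl (by simp [hw]; ring)
  have h₂ := h ⟨0, c₂ * w.imK, 0, w.imI⟩ rfl (by simp [hw]; ring)
  have h₃ := h ⟨0, 0, -c₁ * w.imK, -w.imJ⟩ rfl (by simp [hw]; ring)
  simp only [re_mul] at h₁ h₂ h₃
  have hK : w.imK = 0 := by
    have : c₁ * c₂ * (2 * c₁ * c₂ * w.imK ^ 2) = 0 := by
      linear_combination h₁ + c₁ * h₂ + c₂ * h₃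
    simpa [h2, hc₁, hc₂] using this
  have hI : w.imI = 0 := by
    have : c₁ * c₂ * w.imI ^ 2 = 0 := by linear_combination -h₂ + c₁ * c₂ ^ 2 * w.imK * hK
    simpa [hc₁, hc₂] using this
  have hJ : w.imJ = 0 := by
    have : c₁ * c₂ * w.imJ ^ 2 = 0 := by linear_combination -h₃ + c₁ ^ 2 * c₂ * w.imK * hK
    simpa [hc₁, hc₂] using this
  ext <;> simp [hw, hI, hJ, hK]

theorem exists_eq_commutator_of_re_eq_zero (h2 : (2 : F) ≠ 0) (hc₁ : c₁ ≠ 0) (hc₂ : c₂ ≠ 0)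
    {w : ℍ[F, c₁, c₂]} (hw : w.re = 0) :
    ∃ y z : ℍ[F, c₁, c₂], y.re = 0 ∧ z.re = 0 ∧ w = y * z - z * y := by
  rcases eq_or_ne w 0 with rfl | hw0
  · exact ⟨0, 0, rfl, rfl, by simp⟩
  obtain ⟨y, hy, hyw, hyy⟩ := exists_anisotropic_orthogonal_of_re_eq_zero h2 hc₁ hc₂ hw hw0
  refine ⟨y, _, hy, ?_, eq_commutator_of_mul_self_eq_algebraMap (mul_ne_zero h2 hyy)
    (mul_self_eq_algebraMap_of_re_eq_zero hy) (mul_comm_eq_neg_of_re_eq_zero hy hw hyw)⟩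
  simp [hyw]

theorem setOf_commutator_eq (h2 : (2 : F) ≠ 0) (hc₁ : c₁ ≠ 0) (hc₂ : c₂ ≠ 0) :
    {x : ℍ[F, c₁, c₂] | ∃ y z, x = y * z - z * y} = {x | x.re = 0} := by
  ext x
  constructor
  · rintro ⟨y, z, rfl⟩
    exact re_mul_sub_mul y z
  · intro hx
    obtain ⟨y, z, -, -, h⟩ := exists_eq_commutator_of_re_eq_zero h2 hc₁ hc₂ hx
    exact ⟨y, z, h⟩

end QuaternionAlgebra

open QuaternionAlgebra

theorem stmt_5_general (F : Type*) [Field F] (h2 : (2 : F) ≠ 0)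
    (a b : F) (ha : a ≠ 0) (hb : b ≠ 0) :
    ({x : ℍ[F, -a, -b] | ∃ y z : ℍ[F, -a, -b], x = y * z - z * y} =
      {x : ℍ[F, -a, -b] | ∃ u v : ℍ[F, -a, -b],
        (∃ y z : ℍ[F, -a, -b], u = y * z - z * y) ∧
        (∃ y z : ℍ[F, -a, -b], v = y * z - z * y) ∧ x = u * v - v * u}) ∧
    ∃ V : Submodule F ℍ[F, -a, -b],
      (V : Set ℍ[F, -a, -b]) = {x : ℍ[F, -a, -b] | ∃ y z : ℍ[F, -a, -b], x = y * z - z * y} := by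
  have hcomm := setOf_commutator_eq h2 (neg_ne_zero.2 ha) (neg_ne_zero.2 hb)
  refine ⟨?_, LinearMap.ker (reₗ _ _ _), ?_⟩
  · ext x
    constructor
    · rintro ⟨y, z, rfl⟩
      obtain ⟨u, v, hu, hv, huv⟩ := exists_eq_commutator_of_re_eq_zero h2
        (neg_ne_zero.2 ha) (neg_ne_zero.2 hb) (re_mul_sub_mul y z)
      exact ⟨u, v, hcomm.ge hu, hcomm.ge hv, huv⟩
    · rintro ⟨u, v, -, -, rfl⟩
      exact ⟨u, v, rfl⟩
  · rw [hcomm]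
    rfl

theorem stmt_5 (F : Type*) [Field F] (h2 : (2 : F) ≠ 0)
    (hpyth : ∀ x y : F, ∃ z : F, x ^ 2 + y ^ 2 = z ^ 2)
    (a b : F) (ha : a ≠ 0) (hb : b ≠ 0) :
    ({x : ℍ[F, -a, -b] | ∃ y z : ℍ[F, -a, -b], x = y * z - z * y} =
      {x : ℍ[F, -a, -b] | ∃ u v : ℍ[F, -a, -b],
        (∃ y z : ℍ[F, -a, -b], u = y * z - z * y) ∧
        (∃ y z : ℍ[F, -a, -b], v = y * z - z * y) ∧ x = u * v - v * u}) ∧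
    ∃ V : Submodule F ℍ[F, -a, -b],
      (V : Set ℍ[F, -a, -b]) = {x : ℍ[F, -a, -b] | ∃ y z : ℍ[F, -a, -b], x = y * z - z * y} :=
  stmt_5_general F h2 a b ha hb
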